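/- arXiv:1712.10146 — 9 statements merged into one kernel-verified Lean document; each statement's English description precedes it below -/
import Mathlib

section
/- Let A be a commutative ring, let X be a cochain complex of A-modules, and let a ∈ A. Let m_a : X → X be the morphism of complexes given in every degree by multiplication by a. Then a annihilates every cohomology module of the mapping cone of m_a; that is, for every i ∈ ℤ, multiplication by a is the zero endomorphism of H^i(Cone(m_a)). -/
/-!
On the cone of `φ : K ⟶ K`, the degree `-1` map `h (x, y) = (y, 0)` satisfies
`d h + h d = φ ⊕ φ`. For `φ = a • 𝟙` this exhibits multiplication by `a` on the cone as
null-homotopic, so it acts by zero on cohomology.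
-/

open CategoryTheory Limits

namespace HomologicalComplex

variable {R : Type*} [Semiring R] {C : Type*} [Category C] [Preadditive C] [Linear R C]
  {ι : Type*} {c : ComplexShape ι} {K L : HomologicalComplex C c}

lemma homologyMap_smul (f : K ⟶ L) (r : R) (i : ι) [K.HasHomology i] [L.HasHomology i] :
    homologyMap (r • f) i = r • homologyMap f i :=
  ShortComplex.homologyMap_smul ((shortComplexFunctor C c i).map f) r

end HomologicalComplex

namespace CochainComplex

open HomComplex

variable {C : Type*} [Category C] [Preadditive C]

lemma HomComplex.Cochain.ofHom_smul {R : Type*} [Ring R] [Linear R C] {F G : CochainComplex C ℤ}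
    (r : R) (f : F ⟶ G) : Cochain.ofHom (r • f) = r • Cochain.ofHom f := by
  ext p
  simp

namespace mappingCone

variable [HasBinaryBiproducts C]

lemma δ_snd_comp_inl {K : CochainComplex C ℤ} (φ : K ⟶ K) :
    δ (-1) 0 ((snd φ).comp (inl φ) (zero_add (-1))) =
      (fst φ).1.comp ((Cochain.ofHom φ).comp (inl φ) (zero_add (-1))) (add_neg_cancel 1) +
        (snd φ).comp (Cochain.ofHom (φ ≫ inr φ)) (add_zero 0) := by
  rw [δ_comp _ _ _ 1 0 0 (neg_add_cancel 1) (zero_add 1) (neg_add_cancel 1), δ_inl, δ_snd,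
    add_comm]
  simp

noncomputable def smulIdHomotopyZero {R : Type*} [Ring R] [Linear R C]
    (X : CochainComplex C ℤ) (r : R) :
    Homotopy (r • 𝟙 (mappingCone (r • 𝟙 X))) 0 :=
  (Cochain.equivHomotopy _ _).symm ⟨(snd _).comp (inl _) (zero_add (-1)), by
    rw [δ_snd_comp_inl, Cochain.ofHom_zero, add_zero, Cochain.ofHom_smul, Linear.smul_comp,
      Category.id_comp, Cochain.ofHom_smul, Cochain.ofHom_smul, Cochain.smul_comp,
      Cochain.id_comp, Cochain.comp_smul, Cochain.comp_smul, ← smul_add, mappingCone.id]⟩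

end mappingCone

end CochainComplex

/-- Multiplication by `a` annihilates the cohomology of the mapping cone of the
multiplication-by-`a` endomorphism of a cochain complex of `A`-modules. -/
theorem mul_self_cone_cohomology_smul_eq_zero
    {A : Type} [CommRing A] (X : CochainComplex (ModuleCat A) ℤ) (a : A) (i : ℤ) :
    a • 𝟙 ((CochainComplex.mappingCone
      ((a • 𝟙 X : X ⟶ X))).homology i) = 0 := by
  have h := (CochainComplex.mappingCone.smulIdHomotopyZero X a).homologyMap_eq i
  rwa [HomologicalComplex.homologyMap_smul, HomologicalComplex.homologyMap_id,
    HomologicalComplex.homologyMap_zero] at h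
end

section
/- Let A be a commutative Noetherian ring, 𝔮 ⊆ A an ideal, M a finitely generated A-module, c ≥ 1 an integer, a ∈ 𝔮^c, and n ∈ ℕ. In the localized module M_a (the localization of M at the multiplicative set of powers of a), for each k ≥ 0 let S_k be the A-submodule of M_a generated by the elements x/a^k with x ∈ 𝔮^{n+kc}M, and let T_k be the A-submodule of M_a generated by the elements x/a^k with x ∈ (𝔮^c)^k M. Then ⨆_{k≥0} S_k = 𝔮^n · (⨆_{k≥0} T_k). -/
namespace LocalizedModule

variable {R M : Type*} [CommSemiring R] [AddCommMonoid M] [Module R M] {S : Submonoid R}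

theorem span_setOf_mk_eq_map (s : S) (N : Submodule R M) :
    Submodule.span R {y | ∃ x ∈ N, y = mk x s} = N.map ((divBy s).comp (mkLinearMap S M)) := by
  have hset : {y | ∃ x ∈ N, y = mk x s} = (divBy s).comp (mkLinearMap S M) '' N := by
    ext y
    simp [eq_comm, mkLinearMap_apply, divBy_apply, liftOn_mk]
  rw [hset, Submodule.span_image, Submodule.span_eq]

end LocalizedModule

theorem sup_span_mk_eq_smul_sup_span_mk_general
    {A : Type} [CommRing A] (𝔮 : Ideal A)
    {M : Type} [AddCommGroup M] [Module A M]
    (c : ℕ) (a : A) (n : ℕ) :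
    (⨆ k : ℕ, Submodule.span A
      { y : LocalizedModule (Submonoid.powers a) M |
        ∃ x ∈ (𝔮 ^ (n + k * c) • (⊤ : Submodule A M)),
          y = LocalizedModule.mk x ⟨a ^ k, pow_mem (Submonoid.mem_powers a) k⟩ }) =
    𝔮 ^ n • (⨆ k : ℕ, Submodule.span A
      { y : LocalizedModule (Submonoid.powers a) M |
        ∃ x ∈ ((𝔮 ^ c) ^ k • (⊤ : Submodule A M)),
          y = LocalizedModule.mk x ⟨a ^ k, pow_mem (Submonoid.mem_powers a) k⟩ }) := by
  have hpow (k : ℕ) : 𝔮 ^ (n + k * c) = 𝔮 ^ n * (𝔮 ^ c) ^ k := by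
    rw [← pow_mul, ← pow_add, mul_comm c]
  simp_rw [LocalizedModule.span_setOf_mk_eq_map, hpow, Submodule.mul_smul, Submodule.map_smul'',
    Submodule.smul_iSup]

/-- The direct limit of the system `{𝔮^{n+kc}M, ·a}`, realized inside `M_a` as the union of
the submodules `S_k` generated by the `x/a^k` with `x ∈ 𝔮^{n+kc}M`, equals
`𝔮^n · M[𝔮^c/a]`, where `M[𝔮^c/a] = ⨆_k T_k` with `T_k` generated by the `x/a^k`
with `x ∈ (𝔮^c)^k M`. -/
theorem sup_span_mk_eq_smul_sup_span_mk
    {A : Type} [CommRing A] [IsNoetherianRing A] (𝔮 : Ideal A)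
    {M : Type} [AddCommGroup M] [Module A M] [Module.Finite A M]
    (c : ℕ) (hc : 1 ≤ c) (a : A) (ha : a ∈ 𝔮 ^ c) (n : ℕ) :
    (⨆ k : ℕ, Submodule.span A
      { y : LocalizedModule (Submonoid.powers a) M |
        ∃ x ∈ (𝔮 ^ (n + k * c) • (⊤ : Submodule A M)),
          y = LocalizedModule.mk x ⟨a ^ k, pow_mem (Submonoid.mem_powers a) k⟩ }) =
    𝔮 ^ n • (⨆ k : ℕ, Submodule.span A
      { y : LocalizedModule (Submonoid.powers a) M |
        ∃ x ∈ ((𝔮 ^ c) ^ k • (⊤ : Submodule A M)),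
          y = LocalizedModule.mk x ⟨a ^ k, pow_mem (Submonoid.mem_powers a) k⟩ }) :=
  sup_span_mk_eq_smul_sup_span_mk_general 𝔮 c a n
end

section
/- Let A be a commutative Noetherian ring, 𝔮 ⊆ A an ideal, M a finitely generated A-module, c ≥ 1 an integer, and a ∈ 𝔮^c an element that is a nonzerodivisor on M. Assume there exists an integer k such that (𝔮^{n+1+c}M :_M a) ∩ 𝔮^nM ⊆ 𝔮^{n+1}M for all n ≥ k. Then there exists an integer N such that aM ∩ 𝔮^{n+c}M = a·(𝔮^nM) for all n ≥ N. -/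
/-!
By Artin–Rees, an element of `aM ∩ 𝔮^{n+c}M` is `a • m` with `m ∈ 𝔮^{n+c-k₀}M` for a fixed `k₀`.
Once `n + c - k₀` is past the threshold `k` of the hypothesis, each application of
`(𝔮^{j+1+c}M :_M a) ∩ 𝔮^jM ⊆ 𝔮^{j+1}M` raises the filtration degree of `m` by one, as long as
`j + 1 + c ≤ n + c`; so `m ∈ 𝔮^nM`.
-/

open Submodule

theorem Ideal.exists_map_inf_pow_smul_le_map_pow_smul {R M M' : Type*} [CommRing R]
    [IsNoetherianRing R] [AddCommGroup M] [Module R M] [Module.Finite R M] [AddCommGroup M']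
    [Module R M'] (I : Ideal R) (f : M' →ₗ[R] M) :
    ∃ k : ℕ, ∀ n ≥ k, Submodule.map f ⊤ ⊓ I ^ n • ⊤ ≤ Submodule.map f (I ^ (n - k) • ⊤) := by
  obtain ⟨k, hk⟩ := I.exists_pow_inf_eq_pow_smul (Submodule.map f ⊤)
  refine ⟨k, fun n hn => ?_⟩
  rw [inf_comm, hk n hn, map_smul'']
  exact smul_mono_right _ inf_le_right

theorem mem_pow_smul_top_of_smul_mem_pow_add_smul_top {R M : Type*} [CommRing R]
    [AddCommGroup M] [Module R M] {I : Ideal R} {a : R} {c k : ℕ}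
    (hk : ∀ n ≥ k, comap (a • LinearMap.id) (I ^ (n + 1 + c) • ⊤) ⊓ (I ^ n • ⊤) ≤
      I ^ (n + 1) • (⊤ : Submodule R M))
    {m : M} {j : ℕ} (hj : k ≤ j) (hm : m ∈ I ^ j • (⊤ : Submodule R M)) :
    ∀ n, a • m ∈ I ^ (n + c) • (⊤ : Submodule R M) → m ∈ I ^ n • (⊤ : Submodule R M)
  | 0, _ => by simp
  | n + 1, ham => by
    by_cases hnj : n + 1 ≤ j
    · exact smul_mono_left (Ideal.pow_le_pow_right hnj) hm
    · have hmn := mem_pow_smul_top_of_smul_mem_pow_add_smul_top hk hj hm n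
        (smul_mono_left (Ideal.pow_le_pow_right (by omega)) ham)
      exact hk n (by omega) ⟨by simpa using ham, hmn⟩

theorem map_smul_pow_smul_top_le {R M : Type*} [CommRing R] [AddCommGroup M] [Module R M]
    {I : Ideal R} {a : R} {c : ℕ} (ha : a ∈ I ^ c) (n : ℕ) :
    map (a • LinearMap.id) (I ^ n • ⊤) ≤ I ^ (n + c) • (⊤ : Submodule R M) := by
  rintro _ ⟨m, hm, rfl⟩
  rw [add_comm, pow_add, mul_smul]
  simpa using smul_mem_smul ha hm

theorem smul_inter_pow_smul_eq_of_initial_form_regular_general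
    {A M : Type} [CommRing A] [IsNoetherianRing A] [AddCommGroup M] [Module A M]
    [Module.Finite A M] (𝔮 : Ideal A) (c : ℕ) (a : A) (ha : a ∈ 𝔮 ^ c)
    (h : ∃ k : ℕ, ∀ n ≥ k,
      Submodule.comap (a • (LinearMap.id : M →ₗ[A] M)) (𝔮 ^ (n + 1 + c) • ⊤) ⊓
        (𝔮 ^ n • ⊤) ≤ 𝔮 ^ (n + 1) • ⊤) :
    ∃ N : ℕ, ∀ n ≥ N,
      Submodule.map (a • (LinearMap.id : M →ₗ[A] M)) ⊤ ⊓ (𝔮 ^ (n + c) • ⊤) =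
        Submodule.map (a • (LinearMap.id : M →ₗ[A] M)) (𝔮 ^ n • ⊤) := by
  obtain ⟨k, hk⟩ := h
  obtain ⟨k₀, hAR⟩ := 𝔮.exists_map_inf_pow_smul_le_map_pow_smul (a • LinearMap.id : M →ₗ[A] M)
  refine ⟨k + k₀, fun n hn => le_antisymm ?_ ?_⟩
  · intro x hx
    obtain ⟨m, hm, rfl⟩ := hAR (n + c) (by omega) hx
    exact ⟨m, mem_pow_smul_top_of_smul_mem_pow_add_smul_top hk (by omega) hm n hx.2, rfl⟩
  · exact le_inf (map_mono le_top) (map_smul_pow_smul_top_le ha n)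

/-- If `a ∈ 𝔮^c` is a nonzerodivisor on `M` whose initial form avoids the relevant associated
primes of `G_M(𝔮)` (elementary form: `(𝔮^{n+1+c}M :_M a) ∩ 𝔮^nM ⊆ 𝔮^{n+1}M` for all large
`n`), then `aM ∩ 𝔮^{n+c}M = a·(𝔮^nM)` for all large `n`. -/
theorem smul_inter_pow_smul_eq_of_initial_form_regular
    {A M : Type} [CommRing A] [IsNoetherianRing A] [AddCommGroup M] [Module A M]
    [Module.Finite A M] (𝔮 : Ideal A) (c : ℕ) (hc : 1 ≤ c) (a : A) (ha : a ∈ 𝔮 ^ c)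
    (hreg : ∀ m : M, a • m = 0 → m = 0)
    (h : ∃ k : ℕ, ∀ n ≥ k,
      Submodule.comap (a • (LinearMap.id : M →ₗ[A] M)) (𝔮 ^ (n + 1 + c) • ⊤) ⊓
        (𝔮 ^ n • ⊤) ≤ 𝔮 ^ (n + 1) • ⊤) :
    ∃ N : ℕ, ∀ n ≥ N,
      Submodule.map (a • (LinearMap.id : M →ₗ[A] M)) ⊤ ⊓ (𝔮 ^ (n + c) • ⊤) =
        Submodule.map (a • (LinearMap.id : M →ₗ[A] M)) (𝔮 ^ n • ⊤) :=
  smul_inter_pow_smul_eq_of_initial_form_regular_general 𝔮 c a ha h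
end

section
/- Let A be a commutative Noetherian ring, 𝔮 ⊆ A an ideal, M a finitely generated A-module, c ≥ 1 an integer, and a ∈ 𝔮^c. Then the following conditions are equivalent: (i) there exists an integer k such that (𝔮^{n+1+c}M :_M a) ∩ 𝔮^nM ⊆ 𝔮^{n+1}M for all n ≥ k; (ii) there exist integers l, k such that (𝔮^{n+c}M :_M a) ∩ 𝔮^lM = 𝔮^nM for all n ≥ k. -/
/-!
Write `C n = (𝔮^{n+c}M :_M a)` and `F n = 𝔮^nM`. Both are decreasing in `n` and `F n ≤ C n`
because `a ∈ 𝔮^c`, so the equivalence is a statement about two decreasing chains in a lattice.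
Condition (i) says `C (n+1) ⊓ F n ≤ F (n+1)` eventually; by induction on `n` it gives
`C n ⊓ F k = F n` for `n ≥ k`. Conversely, `C (n+1) ⊓ F n ≤ C (n+1) ⊓ F l = F (n+1)` once `n ≥ l`.
-/

section DecreasingChains

variable {α : Type*}

theorem inf_eq_of_forall_inf_succ_le [Lattice α] {C F : ℕ → α} (hC : Antitone C)
    (hF : Antitone F) (hFC : ∀ n, F n ≤ C n) {k : ℕ}
    (h : ∀ n ≥ k, C (n + 1) ⊓ F n ≤ F (n + 1)) : ∀ n ≥ k, C n ⊓ F k = F n := by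
  intro n hn
  refine le_antisymm ?_ (le_inf (hFC n) (hF hn))
  induction n, hn using Nat.le_induction with
  | base => exact inf_le_right
  | succ n hn ih =>
    have hFn : C (n + 1) ⊓ F k ≤ F n := (inf_le_inf_right _ (hC n.le_succ)).trans ih
    exact (le_inf inf_le_left hFn).trans (h n hn)

theorem inf_succ_le_of_forall_inf_eq [SemilatticeInf α] {C F : ℕ → α} (hF : Antitone F)
    {l k : ℕ} (h : ∀ n ≥ k, C n ⊓ F l = F n) : ∀ n ≥ max k l, C (n + 1) ⊓ F n ≤ F (n + 1) :=
  fun n hn => calc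
    C (n + 1) ⊓ F n ≤ C (n + 1) ⊓ F l := inf_le_inf_left _ (hF (le_of_max_le_right hn))
    _ = F (n + 1) := h (n + 1) (by omega)

end DecreasingChains

namespace Submodule

variable {R M : Type*} [CommRing R] [AddCommGroup M] [Module R M]

theorem le_comap_smul_id_smul {I : Ideal R} {a : R} (ha : a ∈ I) (N : Submodule R M) :
    N ≤ comap (a • LinearMap.id) (I • N) :=
  fun _ hx => smul_mem_smul ha hx

theorem pow_smul_top_le_comap_smul_id {𝔮 : Ideal R} {a : R} {c : ℕ} (ha : a ∈ 𝔮 ^ c) (n : ℕ) :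
    (𝔮 ^ n • ⊤ : Submodule R M) ≤ comap (a • LinearMap.id) (𝔮 ^ (n + c) • ⊤) := by
  have h := le_comap_smul_id_smul ha (𝔮 ^ n • ⊤ : Submodule R M)
  rwa [← smul_assoc, smul_eq_mul, ← pow_add, add_comm c n] at h

end Submodule

theorem initial_form_superficial_iff_general
    {A M : Type} [CommRing A] [AddCommGroup M] [Module A M]
    (𝔮 : Ideal A) (c : ℕ) (a : A) (ha : a ∈ 𝔮 ^ c) :
    (∃ k : ℕ, ∀ n ≥ k,
      Submodule.comap (a • (LinearMap.id : M →ₗ[A] M)) (𝔮 ^ (n + 1 + c) • ⊤) ⊓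
        (𝔮 ^ n • ⊤) ≤ 𝔮 ^ (n + 1) • ⊤) ↔
    (∃ l k : ℕ, ∀ n ≥ k,
      Submodule.comap (a • (LinearMap.id : M →ₗ[A] M)) (𝔮 ^ (n + c) • ⊤) ⊓
        (𝔮 ^ l • ⊤) = 𝔮 ^ n • ⊤) := by
  set C : ℕ → Submodule A M := fun n => Submodule.comap (a • LinearMap.id) (𝔮 ^ (n + c) • ⊤)
  have hC : Antitone C := fun _ _ h =>
    Submodule.comap_mono (Submodule.pow_smul_top_le 𝔮 M (Nat.add_le_add_right h c))
  have hF : Antitone fun n => (𝔮 ^ n • ⊤ : Submodule A M) :=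
    fun _ _ => Submodule.pow_smul_top_le 𝔮 M
  constructor
  · rintro ⟨k, hk⟩
    exact ⟨k, k, inf_eq_of_forall_inf_succ_le hC hF
      (Submodule.pow_smul_top_le_comap_smul_id ha) hk⟩
  · rintro ⟨l, k, hlk⟩
    exact ⟨max k l, inf_succ_le_of_forall_inf_eq hF hlk⟩

/-- For `a ∈ 𝔮^c`, the condition `(𝔮^{n+1+c}M :_M a) ∩ 𝔮^nM ⊆ 𝔮^{n+1}M` for all large `n`
is equivalent to the existence of integers `l, k` with
`(𝔮^{n+c}M :_M a) ∩ 𝔮^lM = 𝔮^nM` for all `n ≥ k`. -/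
theorem initial_form_superficial_iff
    {A M : Type} [CommRing A] [IsNoetherianRing A] [AddCommGroup M] [Module A M]
    [Module.Finite A M] (𝔮 : Ideal A) (c : ℕ) (hc : 1 ≤ c) (a : A) (ha : a ∈ 𝔮 ^ c) :
    (∃ k : ℕ, ∀ n ≥ k,
      Submodule.comap (a • (LinearMap.id : M →ₗ[A] M)) (𝔮 ^ (n + 1 + c) • ⊤) ⊓
        (𝔮 ^ n • ⊤) ≤ 𝔮 ^ (n + 1) • ⊤) ↔
    (∃ l k : ℕ, ∀ n ≥ k,
      Submodule.comap (a • (LinearMap.id : M →ₗ[A] M)) (𝔮 ^ (n + c) • ⊤) ⊓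
        (𝔮 ^ l • ⊤) = 𝔮 ^ n • ⊤) :=
  initial_form_superficial_iff_general 𝔮 c a ha
end

section
/- Let A be a commutative Noetherian ring, 𝔮 ⊆ A an ideal, M a finitely generated A-module, c ≥ 1 an integer, a ∈ 𝔮^c, and n ≥ 1. In the localized module M_a, for each k ≥ 0 let T_k be the A-submodule of M_a generated by the elements x/a^k with x ∈ (𝔮^c)^kM, and set M[𝔮^c/a] = ⨆_{k≥0} T_k. Then the preimage of the submodule 𝔮^n·M[𝔮^c/a] under the canonical map M → M_a equals ⨆_{l≥0} (𝔮^n(𝔮^c)^lM :_M a^l). -/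
/-!
Write `T_k` as the image of `(𝔮^c)^k M` under `x ↦ x/a^k`, so that `𝔮^n T_k` is the image of
`P_k = 𝔮^n(𝔮^c)^k M`. Since `a ∈ 𝔮^c` we have `a P_k ⊆ P_{k+1}`, so these images increase with `k`,
and `x/1 = z/a^k` with `z ∈ P_k` means `a^(j+k) x = a^j z ∈ P_{j+k}` for some `j`.
-/

namespace LocalizedModule

variable {R : Type*} [CommRing R] {S : Submonoid R} {M : Type*} [AddCommGroup M] [Module R M]

noncomputable def mkDiv (s : S) : M →ₗ[R] LocalizedModule S M where
  toFun x := mk x s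
  map_add' x y := by rw [mk_add_mk, ← smul_add, mk_cancel_common_left]
  map_smul' r x := by rw [RingHom.id_apply, smul'_mk]

theorem span_setOf_eq_mk_eq_map_mkDiv (N : Submodule R M) (s : S) :
    Submodule.span R {y : LocalizedModule S M | ∃ x ∈ N, y = mk x s} = N.map (mkDiv s) := by
  refine le_antisymm (Submodule.span_le.mpr ?_) ?_
  · rintro _ ⟨x, hx, rfl⟩
    exact ⟨x, hx, rfl⟩
  · rintro _ ⟨x, hx, rfl⟩
    exact Submodule.subset_span ⟨x, hx, rfl⟩

theorem map_mkDiv_le_map_mkDiv_mul {N N' : Submodule R M} (t s : S)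
    (hN : ∀ x ∈ N, (t : R) • x ∈ N') : N.map (mkDiv s) ≤ N'.map (mkDiv (t * s)) := by
  rintro _ ⟨x, hx, rfl⟩
  exact ⟨(t : R) • x, hN x hx, mk_cancel_common_left t s x⟩

end LocalizedModule

open LocalizedModule

section PowersLocalization

variable {A : Type*} [CommRing A] {M : Type*} [AddCommGroup M] [Module A M]

noncomputable abbrev mkDivPow (a : A) (k : ℕ) : M →ₗ[A] LocalizedModule (Submonoid.powers a) M :=
  mkDiv ⟨a ^ k, pow_mem (Submonoid.mem_powers a) k⟩

theorem pow_smul_mem_of_smul_mem_succ {a : A} {P : ℕ → Submodule A M}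
    (hP : ∀ k, ∀ x ∈ P k, a • x ∈ P (k + 1)) (j : ℕ) {k : ℕ} {x : M} (hx : x ∈ P k) :
    a ^ j • x ∈ P (j + k) := by
  induction j with
  | zero => simpa using hx
  | succ j ih =>
    rw [pow_succ', mul_smul, Nat.add_right_comm]
    exact hP _ _ ih

theorem monotone_map_mkDivPow {a : A} {P : ℕ → Submodule A M}
    (hP : ∀ k, ∀ x ∈ P k, a • x ∈ P (k + 1)) :
    Monotone fun k => (P k).map (mkDivPow a k) :=
  monotone_nat_of_le_succ fun k => by
    convert map_mkDiv_le_map_mkDiv_mul ⟨a, Submonoid.mem_powers a⟩ _ (hP k) using 3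
    ext
    simp [pow_succ']

theorem comap_mkLinearMap_iSup_map_mkDivPow {a : A} {P : ℕ → Submodule A M}
    (hP : ∀ k, ∀ x ∈ P k, a • x ∈ P (k + 1)) :
    (⨆ k, (P k).map (mkDivPow a k)).comap (mkLinearMap (Submonoid.powers a) M) =
      ⨆ l, (P l).comap (a ^ l • LinearMap.id) := by
  refine le_antisymm (fun x hx => ?_) (iSup_le fun l x hx => ?_)
  · obtain ⟨k, z, hz, hzx⟩ :=
      (Submodule.mem_iSup_of_directed _ (monotone_map_mkDivPow hP).directed_le).mp hx
    obtain ⟨⟨_, j, rfl⟩, hu⟩ := mk_eq.mp hzx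
    simp only [Submonoid.smul_def, one_smul] at hu
    refine Submodule.mem_iSup_of_mem (j + k) ?_
    have hxz : a ^ (j + k) • x = a ^ j • z := by rw [pow_add, mul_smul, hu]
    simpa [hxz] using pow_smul_mem_of_smul_mem_succ hP j hz
  · refine Submodule.mem_iSup_of_mem l ⟨a ^ l • x, hx, ?_⟩
    exact mk_cancel ⟨a ^ l, pow_mem (Submonoid.mem_powers a) l⟩ x

theorem smul_mem_mul_pow_succ_smul {I J : Ideal A} {a : A} (ha : a ∈ J) (k : ℕ) {x : M}
    (hx : x ∈ (I * J ^ k) • (⊤ : Submodule A M)) :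
    a • x ∈ (I * J ^ (k + 1)) • (⊤ : Submodule A M) := by
  rw [pow_succ', mul_left_comm, Submodule.mul_smul]
  exact Submodule.smul_mem_smul ha hx

end PowersLocalization

theorem comap_mk_smul_sup_eq_sup_colon_general
    {A : Type} [CommRing A] (𝔮 : Ideal A)
    {M : Type} [AddCommGroup M] [Module A M]
    (c : ℕ) (a : A) (ha : a ∈ 𝔮 ^ c) (n : ℕ) :
    Submodule.comap (LocalizedModule.mkLinearMap (Submonoid.powers a) M)
      (𝔮 ^ n • (⨆ k : ℕ, Submodule.span A
        { y : LocalizedModule (Submonoid.powers a) M |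
          ∃ x ∈ ((𝔮 ^ c) ^ k • (⊤ : Submodule A M)),
            y = LocalizedModule.mk x ⟨a ^ k, pow_mem (Submonoid.mem_powers a) k⟩ })) =
    ⨆ l : ℕ, Submodule.comap ((a ^ l) • (LinearMap.id : M →ₗ[A] M))
      ((𝔮 ^ n * (𝔮 ^ c) ^ l) • ⊤) := by
  simp_rw [span_setOf_eq_mk_eq_map_mkDiv, Submodule.smul_iSup, ← Submodule.map_smul'',
    ← Submodule.mul_smul]
  exact comap_mkLinearMap_iSup_map_mkDivPow fun k _ => smul_mem_mul_pow_succ_smul ha k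

/-- The preimage in `M` of the submodule `𝔮^n · M[𝔮^c/a]` of `M_a` under the canonical map
`M → M_a` equals `(𝔮^nM)^{aA} = ⨆_l (𝔮^n(𝔮^c)^lM :_M a^l)`. -/
theorem comap_mk_smul_sup_eq_sup_colon
    {A : Type} [CommRing A] [IsNoetherianRing A] (𝔮 : Ideal A)
    {M : Type} [AddCommGroup M] [Module A M] [Module.Finite A M]
    (c : ℕ) (hc : 1 ≤ c) (a : A) (ha : a ∈ 𝔮 ^ c) (n : ℕ) (hn : 1 ≤ n) :
    Submodule.comap (LocalizedModule.mkLinearMap (Submonoid.powers a) M)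
      (𝔮 ^ n • (⨆ k : ℕ, Submodule.span A
        { y : LocalizedModule (Submonoid.powers a) M |
          ∃ x ∈ ((𝔮 ^ c) ^ k • (⊤ : Submodule A M)),
            y = LocalizedModule.mk x ⟨a ^ k, pow_mem (Submonoid.mem_powers a) k⟩ })) =
    ⨆ l : ℕ, Submodule.comap ((a ^ l) • (LinearMap.id : M →ₗ[A] M))
      ((𝔮 ^ n * (𝔮 ^ c) ^ l) • ⊤) :=
  comap_mk_smul_sup_eq_sup_colon_general 𝔮 c a ha n
end

section
/- Let (A, 𝔪) be a commutative Noetherian local ring, 𝔮 ⊆ 𝔪 an ideal, M a finitely generated A-module, c ≥ 1 an integer, and a ∈ 𝔮^c. For an integer n ≥ 1 let P(n) be the condition: for every k ≥ 1 there exists l ≥ 0 with a^lM ⊆ a^{k+l}M + 𝔮^{n+(k+l)c}M. Then the following are equivalent: (i) P(1) holds; (ii) P(n) holds for every n ≥ 1; (iii) P(n) holds for some n ≥ 1; (iv) ⨆_{l≥0} (𝔮(𝔮^c)^lM :_M a^l) = M. -/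
open Submodule

/-- The condition `P(n)`: for every `k ≥ 1` there exists `l ≥ 0` with
`a^l M ⊆ a^{k+l} M + 𝔮^{n+(k+l)c} M`; it characterizes the vanishing of
`Ľ^1(a,𝔮,M;n)`. -/
def cechLOneVanishes {A M : Type} [CommRing A] [AddCommGroup M] [Module A M]
    (𝔮 : Ideal A) (c : ℕ) (a : A) (n : ℕ) : Prop :=
  ∀ k : ℕ, 1 ≤ k → ∃ l : ℕ,
    Submodule.map ((a ^ l) • (LinearMap.id : M →ₗ[A] M)) ⊤ ≤
      Submodule.map ((a ^ (k + l)) • (LinearMap.id : M →ₗ[A] M)) ⊤ ⊔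
        (𝔮 ^ (n + (k + l) * c) • ⊤)


section Aux

variable {A M : Type} [CommRing A] [AddCommGroup M] [Module A M]

private lemma smulid_mul' (a b : A) :
    ((a * b) • (LinearMap.id : M →ₗ[A] M)) = (a • LinearMap.id) ∘ₗ (b • (LinearMap.id : M →ₗ[A] M)) := by
  ext x
  rw [LinearMap.comp_apply]
  simp only [LinearMap.smul_apply, LinearMap.id_apply]
  rw [mul_smul]

private lemma ideal_mul_smul' (I J : Ideal A) (N : Submodule A M) :
    (I * J) • N = I • (J • N) := by
  rw [← Submodule.smul_assoc]; rfl

/-- The family `N l = (𝔮(𝔮^c)^l M :_M a^l)` is monotone. -/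
private lemma Nfam_mono (𝔮 : Ideal A) (c : ℕ) (a : A) (ha : a ∈ 𝔮 ^ c) :
    Monotone (fun l : ℕ => Submodule.comap ((a ^ l) • (LinearMap.id : M →ₗ[A] M))
      ((𝔮 * (𝔮 ^ c) ^ l) • ⊤)) := by
  apply monotone_nat_of_le_succ
  intro l x hx
  simp only [Submodule.mem_comap, LinearMap.smul_apply, LinearMap.id_apply] at hx ⊢
  have h1 : a ^ (l + 1) • x = a • (a ^ l • x) := by
    rw [← mul_smul, ← pow_succ']
  rw [h1]
  have h2 : a • (a ^ l • x) ∈ (𝔮 ^ c) • ((𝔮 * (𝔮 ^ c) ^ l) • (⊤ : Submodule A M)) :=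
    Submodule.smul_mem_smul ha hx
  have h3 : (𝔮 ^ c) • ((𝔮 * (𝔮 ^ c) ^ l) • (⊤ : Submodule A M))
      = (𝔮 * (𝔮 ^ c) ^ (l + 1)) • ⊤ := by
    rw [← ideal_mul_smul']
    congr 1
    ring
  rwa [h3] at h2

/-- If `P(n)` holds for some `n ≥ 1`, condition (iv) holds. -/
private lemma keyA {A M : Type} [CommRing A] [IsLocalRing A]
    [AddCommGroup M] [Module A M] [Module.Finite A M]
    (𝔮 : Ideal A) (h𝔮 : 𝔮 ≤ IsLocalRing.maximalIdeal A)
    (c : ℕ) (hc : 1 ≤ c) (a : A) (ha : a ∈ 𝔮 ^ c) (n : ℕ) (hn : 1 ≤ n)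
    (hP : cechLOneVanishes (M := M) 𝔮 c a n) :
    (⨆ l : ℕ, Submodule.comap ((a ^ l) • (LinearMap.id : M →ₗ[A] M))
      ((𝔮 * (𝔮 ^ c) ^ l) • ⊤)) = ⊤ := by
  set Nf : ℕ → Submodule A M := fun l => Submodule.comap ((a ^ l) • (LinearMap.id : M →ₗ[A] M))
      ((𝔮 * (𝔮 ^ c) ^ l) • ⊤) with hNf
  obtain ⟨l, hl⟩ := hP 1 le_rfl
  have ham : a ∈ IsLocalRing.maximalIdeal A := h𝔮 (Ideal.pow_le_self (by omega) ha)
  -- every x lies in ⨆ Nf ⊔ 𝔪 • ⊤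
  have htop : (⊤ : Submodule A M) ≤ (⨆ l, Nf l) ⊔ (IsLocalRing.maximalIdeal A) • ⊤ := by
    intro x _
    have hx : (a ^ l) • x ∈ Submodule.map ((a ^ (1 + l)) • (LinearMap.id : M →ₗ[A] M)) ⊤ ⊔
        (𝔮 ^ (n + (1 + l) * c) • ⊤) := by
      apply hl
      exact ⟨x, trivial, by simp⟩
    rw [Submodule.mem_sup] at hx
    obtain ⟨u, hu, v, hv, huv⟩ := hx
    obtain ⟨y, -, hy⟩ := hu
    simp only [LinearMap.smul_apply, LinearMap.id_apply] at hy
    -- w := x - a • y lies in Nf l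
    have hw : x - a • y ∈ Nf l := by
      simp only [hNf, Submodule.mem_comap, LinearMap.smul_apply, LinearMap.id_apply]
      have : a ^ l • (x - a • y) = v := by
        have he : a ^ l * a = a ^ (1 + l) := by rw [pow_add, pow_one, mul_comm]
        rw [smul_sub, ← mul_smul, he, hy, ← huv]
        abel
      rw [this]
      refine Submodule.smul_mono_left ?_ hv
      have h1 : 𝔮 * (𝔮 ^ c) ^ l = 𝔮 ^ (1 + l * c) := by
        rw [pow_add, pow_one, ← pow_mul, mul_comm l c]
      rw [h1]
      exact Ideal.pow_le_pow_right (by nlinarith)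
    have hay : a • y ∈ (IsLocalRing.maximalIdeal A) • (⊤ : Submodule A M) :=
      Submodule.smul_mem_smul ham trivial
    have hxeq : x = (x - a • y) + a • y := by abel
    rw [hxeq]
    exact Submodule.add_mem _
      (Submodule.mem_sup_left (Submodule.mem_iSup_of_mem l hw))
      (Submodule.mem_sup_right hay)
  have hjac : (IsLocalRing.maximalIdeal A) ≤ Ideal.jacobson ⊥ := by
    rw [IsLocalRing.jacobson_eq_maximalIdeal ⊥ bot_ne_top]
  have := Submodule.sup_eq_sup_smul_of_le_smul_of_le_jacobson
    (N := ⨆ l, Nf l) (N' := (⊤ : Submodule A M)) Module.Finite.fg_top hjac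
    (le_trans htop (sup_le_sup_left (smul_mono_right _ le_top) _))
  rw [sup_top_eq, Submodule.bot_smul, sup_bot_eq] at this
  exact this.symm

/-- If condition (iv) holds, then `P(n)` holds for all `n ≥ 1`. -/
private lemma keyB {A M : Type} [CommRing A]
    [AddCommGroup M] [Module A M] [Module.Finite A M]
    (𝔮 : Ideal A)
    (c : ℕ) (hc : 1 ≤ c) (a : A) (ha : a ∈ 𝔮 ^ c)
    (hsup : (⨆ l : ℕ, Submodule.comap ((a ^ l) • (LinearMap.id : M →ₗ[A] M))
      ((𝔮 * (𝔮 ^ c) ^ l) • ⊤)) = ⊤) (n : ℕ) (hn : 1 ≤ n) :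
    cechLOneVanishes (M := M) 𝔮 c a n := by
  set Nf : ℕ → Submodule A M := fun l => Submodule.comap ((a ^ l) • (LinearMap.id : M →ₗ[A] M))
      ((𝔮 * (𝔮 ^ c) ^ l) • ⊤) with hNf
  -- the chain attains ⊤
  obtain ⟨l₀, hl₀⟩ : ∃ l₀, Nf l₀ = ⊤ := by
    have hcomp : IsCompactElement (⊤ : Submodule A M) :=
      (Submodule.fg_iff_compact _).mp Module.Finite.fg_top
    rw [CompleteLattice.isCompactElement_iff_le_of_directed_sSup_le] at hcomp
    have hdir : DirectedOn (· ≤ ·) (Set.range Nf) :=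
      directedOn_range.mpr (Nfam_mono 𝔮 c a ha).directed_le
    obtain ⟨x, ⟨l₀, rfl⟩, hle⟩ := hcomp (Set.range Nf) (Set.range_nonempty _) hdir
      (by rw [sSup_range, hsup])
    exact ⟨l₀, top_le_iff.mp hle⟩
  -- a^{l₀} M ⊆ 𝔮(𝔮^c)^{l₀} M
  have hS : Submodule.map ((a ^ l₀) • (LinearMap.id : M →ₗ[A] M)) ⊤ ≤
      (𝔮 * (𝔮 ^ c) ^ l₀) • ⊤ := by
    rw [Submodule.map_le_iff_le_comap]
    exact le_of_eq hl₀.symm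
  -- iterate
  have hiter : ∀ j : ℕ, Submodule.map ((a ^ (j * l₀)) • (LinearMap.id : M →ₗ[A] M)) ⊤ ≤
      (𝔮 ^ j * (𝔮 ^ c) ^ (j * l₀)) • ⊤ := by
    intro j
    induction j with
    | zero =>
      have : (𝔮 ^ 0 * (𝔮 ^ c) ^ (0 * l₀)) • (⊤ : Submodule A M) = ⊤ := by
        simp [Ideal.one_eq_top, Submodule.top_smul]
      rw [this]; exact le_top
    | succ j ih =>
      have harith : a ^ ((j + 1) * l₀) = a ^ l₀ * a ^ (j * l₀) := by
        rw [← pow_add]; ring_nf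
      rw [harith, smulid_mul', Submodule.map_comp]
      calc Submodule.map ((a ^ l₀) • (LinearMap.id : M →ₗ[A] M))
            (Submodule.map ((a ^ (j * l₀)) • (LinearMap.id : M →ₗ[A] M)) ⊤)
          ≤ Submodule.map ((a ^ l₀) • (LinearMap.id : M →ₗ[A] M))
            ((𝔮 ^ j * (𝔮 ^ c) ^ (j * l₀)) • ⊤) := Submodule.map_mono ih
        _ = (𝔮 ^ j * (𝔮 ^ c) ^ (j * l₀)) •
            Submodule.map ((a ^ l₀) • (LinearMap.id : M →ₗ[A] M)) ⊤ :=
            Submodule.map_smul'' _ _ _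
        _ ≤ (𝔮 ^ j * (𝔮 ^ c) ^ (j * l₀)) • ((𝔮 * (𝔮 ^ c) ^ l₀) • ⊤) :=
            Submodule.smul_mono le_rfl hS
        _ = (𝔮 ^ (j + 1) * (𝔮 ^ c) ^ ((j + 1) * l₀)) • ⊤ := by
            rw [← ideal_mul_smul']
            congr 1
            ring
  -- conclude
  intro k hk
  refine ⟨(n + k * c) * l₀, ?_⟩
  refine le_trans (hiter (n + k * c)) (le_trans ?_ le_sup_right)
  apply Submodule.smul_mono_left
  have h1 : 𝔮 ^ (n + k * c) * (𝔮 ^ c) ^ ((n + k * c) * l₀)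
      = 𝔮 ^ (n + (k + (n + k * c) * l₀) * c) := by
    rw [← pow_mul, ← pow_add]
    congr 1
    ring
  rw [h1]

end Aux

/-- Over a Noetherian local ring with `𝔮 ⊆ 𝔪` and `a ∈ 𝔮^c`: `P(1)` holds iff `P(n)` holds
for every `n ≥ 1` iff `P(n)` holds for some `n ≥ 1` iff
`⨆_l (𝔮(𝔮^c)^lM :_M a^l) = M`. -/
theorem cechLOneVanishes_iff
    {A M : Type} [CommRing A] [IsNoetherianRing A] [IsLocalRing A]
    [AddCommGroup M] [Module A M] [Module.Finite A M]
    (𝔮 : Ideal A) (h𝔮 : 𝔮 ≤ IsLocalRing.maximalIdeal A)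
    (c : ℕ) (hc : 1 ≤ c) (a : A) (ha : a ∈ 𝔮 ^ c) :
    ((cechLOneVanishes (M := M) 𝔮 c a 1) ↔
      ∀ n : ℕ, 1 ≤ n → cechLOneVanishes (M := M) 𝔮 c a n) ∧
    ((cechLOneVanishes (M := M) 𝔮 c a 1) ↔
      ∃ n : ℕ, 1 ≤ n ∧ cechLOneVanishes (M := M) 𝔮 c a n) ∧
    ((cechLOneVanishes (M := M) 𝔮 c a 1) ↔
      (⨆ l : ℕ, Submodule.comap ((a ^ l) • (LinearMap.id : M →ₗ[A] M))
        ((𝔮 * (𝔮 ^ c) ^ l) • ⊤)) = ⊤) := by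
  have hA := keyA (M := M) 𝔮 h𝔮 c hc a ha
  have hB := keyB (M := M) 𝔮 c hc a ha
  refine ⟨⟨fun h n hn => hB (hA 1 le_rfl h) n hn, fun h => h 1 le_rfl⟩,
    ⟨fun h => ⟨1, le_rfl, h⟩, fun ⟨n, hn, h⟩ => hB (hA n hn h) 1 le_rfl⟩,
    ⟨fun h => hA 1 le_rfl h, fun h => hB h 1 le_rfl⟩⟩
end

section
/- Let A be a commutative Noetherian ring, 𝔮 ⊆ A an ideal, M a finitely generated A-module, c ≥ 1 an integer, and a ∈ 𝔮^c a nonzerodivisor on M. Suppose there exists an integer k such that (𝔮^{n+c}M :_M a) = 𝔮^nM for all n ≥ k. Then for all n ≥ k and all l ≥ 0 one has (𝔮^n(𝔮^c)^lM :_M a^l) = 𝔮^nM; in particular ⨆_{l≥0} (𝔮^n(𝔮^c)^lM :_M a^l) = 𝔮^nM for all n ≥ k. -/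
/-! Colon stability propagates along powers of `a`: since `(N :_M a^(l+1)) = ((N :_M a^l) :_M a)`,
induction on `l` at the shifted index `n + c` gives
`(𝔮^(n+c(l+1))M :_M a^(l+1)) = (𝔮^(n+c)M :_M a) = 𝔮^nM`, and the supremum is then constant. -/

theorem Submodule.comap_pow_eq_of_comap_eq {R M : Type*} [Semiring R] [AddCommMonoid M]
    [Module R M] (f : Module.End R M) (F : ℕ → Submodule R M) {c k : ℕ}
    (hF : ∀ n ≥ k, (F (n + c)).comap f = F n) (l : ℕ) {n : ℕ} (hn : k ≤ n) :
    (F (n + c * l)).comap (f ^ l) = F n := by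
  induction l generalizing n with
  | zero => simp [Module.End.one_eq_id]
  | succ l ih =>
    rw [pow_succ, Module.End.mul_eq_comp, Submodule.comap_comp,
      show n + c * (l + 1) = n + c + c * l by ring, ih (by omega), hF n hn]

theorem saturation_eq_of_colon_stable_general
    {A M : Type} [CommRing A] [AddCommGroup M] [Module A M]
    (𝔮 : Ideal A) (c : ℕ) (a : A) (k : ℕ)
    (h : ∀ n ≥ k,
      Submodule.comap (a • (LinearMap.id : M →ₗ[A] M)) (𝔮 ^ (n + c) • ⊤) = 𝔮 ^ n • ⊤) :
    (∀ n ≥ k, ∀ l : ℕ,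
      Submodule.comap ((a ^ l) • (LinearMap.id : M →ₗ[A] M))
        ((𝔮 ^ n * (𝔮 ^ c) ^ l) • ⊤) = 𝔮 ^ n • ⊤) ∧
    (∀ n ≥ k,
      (⨆ l : ℕ, Submodule.comap ((a ^ l) • (LinearMap.id : M →ₗ[A] M))
        ((𝔮 ^ n * (𝔮 ^ c) ^ l) • ⊤)) = 𝔮 ^ n • ⊤) := by
  have colon : ∀ n ≥ k, ∀ l : ℕ,
      Submodule.comap ((a ^ l) • (LinearMap.id : M →ₗ[A] M))
        ((𝔮 ^ n * (𝔮 ^ c) ^ l) • ⊤) = 𝔮 ^ n • ⊤ := by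
    intro n hn l
    have hsmul : (a ^ l) • (LinearMap.id : M →ₗ[A] M) = (a • LinearMap.id) ^ l := by
      rw [smul_pow, ← Module.End.one_eq_id, one_pow]
    rw [hsmul, ← pow_mul, ← pow_add]
    exact Submodule.comap_pow_eq_of_comap_eq _ (fun n => 𝔮 ^ n • ⊤) h l hn
  exact ⟨colon, fun n hn => by simp_rw [colon n hn]; exact iSup_const⟩

/-- If `a ∈ 𝔮^c` is a nonzerodivisor on `M` and `(𝔮^{n+c}M :_M a) = 𝔮^nM` for all `n ≥ k`,
then `(𝔮^n(𝔮^c)^lM :_M a^l) = 𝔮^nM` for all `n ≥ k` and `l ≥ 0`; in particular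
`(𝔮^nM)^{aA} = ⨆_l (𝔮^n(𝔮^c)^lM :_M a^l) = 𝔮^nM` for all `n ≥ k`. -/
theorem saturation_eq_of_colon_stable
    {A M : Type} [CommRing A] [IsNoetherianRing A] [AddCommGroup M] [Module A M]
    [Module.Finite A M] (𝔮 : Ideal A) (c : ℕ) (hc : 1 ≤ c) (a : A) (ha : a ∈ 𝔮 ^ c)
    (hreg : ∀ m : M, a • m = 0 → m = 0) (k : ℕ)
    (h : ∀ n ≥ k,
      Submodule.comap (a • (LinearMap.id : M →ₗ[A] M)) (𝔮 ^ (n + c) • ⊤) = 𝔮 ^ n • ⊤) :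
    (∀ n ≥ k, ∀ l : ℕ,
      Submodule.comap ((a ^ l) • (LinearMap.id : M →ₗ[A] M))
        ((𝔮 ^ n * (𝔮 ^ c) ^ l) • ⊤) = 𝔮 ^ n • ⊤) ∧
    (∀ n ≥ k,
      (⨆ l : ℕ, Submodule.comap ((a ^ l) • (LinearMap.id : M →ₗ[A] M))
        ((𝔮 ^ n * (𝔮 ^ c) ^ l) • ⊤)) = 𝔮 ^ n • ⊤) :=
  saturation_eq_of_colon_stable_general 𝔮 c a k h
end

section
/- Let (A, 𝔪) be a commutative Noetherian local ring, 𝔮 ⊆ 𝔪 an ideal, M a finitely generated A-module, c ≥ 1 an integer, and a ∈ 𝔮^c. Suppose there exists an integer N such that ⨆_{l≥0} (𝔮^n(𝔮^c)^lM :_M a^l) = 𝔮^nM for all n ≥ N. Then (0 :_M a) = 0, and (𝔮^{n+c}M :_M a) = 𝔮^nM for all n ≥ N. -/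
/-!
Taking `l = 1` in the supremum gives `(𝔮^{n+c}M :_M a) ⊆ 𝔮^nM`, and the reverse inclusion holds
because `a ∈ 𝔮^c`. Since `(0 :_M a) ⊆ (𝔮^{n+c}M :_M a)`, the annihilator of `a` lies in every
`𝔮^nM`, so it vanishes by Krull's intersection theorem.
-/

namespace Submodule

variable {A M : Type*} [CommRing A] [AddCommGroup M] [Module A M]

lemma le_comap_smul_id_smul_of_mem {J : Ideal A} {a : A} (ha : a ∈ J) (P : Submodule A M) :
    P ≤ (J • P).comap (a • LinearMap.id) :=
  fun _ hm => smul_mem_smul ha hm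

lemma comap_smul_id_le_iSup_comap_pow_smul_id (I J : Ideal A) (a : A) :
    ((I * J) • ⊤ : Submodule A M).comap (a • LinearMap.id) ≤
      ⨆ l : ℕ, ((I * J ^ l) • ⊤ : Submodule A M).comap (a ^ l • LinearMap.id) := by
  convert le_iSup (fun l : ℕ => ((I * J ^ l) • ⊤ : Submodule A M).comap (a ^ l • LinearMap.id)) 1
    <;> simp only [pow_one]

end Submodule

open Submodule in
theorem regular_and_colon_stable_of_saturation_eq_general
    {A M : Type} [CommRing A] [IsNoetherianRing A] [IsLocalRing A]
    [AddCommGroup M] [Module A M] [Module.Finite A M]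
    (𝔮 : Ideal A) (h𝔮 : 𝔮 ≤ IsLocalRing.maximalIdeal A)
    (c : ℕ) (a : A) (ha : a ∈ 𝔮 ^ c) (N : ℕ)
    (h : ∀ n ≥ N,
      (⨆ l : ℕ, Submodule.comap ((a ^ l) • (LinearMap.id : M →ₗ[A] M))
        ((𝔮 ^ n * (𝔮 ^ c) ^ l) • ⊤)) = 𝔮 ^ n • ⊤) :
    LinearMap.ker (a • (LinearMap.id : M →ₗ[A] M)) = ⊥ ∧
    ∀ n ≥ N,
      Submodule.comap (a • (LinearMap.id : M →ₗ[A] M)) (𝔮 ^ (n + c) • ⊤) = 𝔮 ^ n • ⊤ := by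
  have colon_le : ∀ n ≥ N,
      (𝔮 ^ (n + c) • ⊤ : Submodule A M).comap (a • LinearMap.id) ≤ 𝔮 ^ n • ⊤ := fun n hn => by
    rw [← h n hn, pow_add]
    exact comap_smul_id_le_iSup_comap_pow_smul_id _ _ a
  refine ⟨?_, fun n hn => le_antisymm (colon_le n hn) ?_⟩
  · have h𝔮_ne_top : 𝔮 ≠ ⊤ :=
      ne_top_of_le_ne_top (IsLocalRing.maximalIdeal.isMaximal A).ne_top h𝔮
    rw [eq_bot_iff, ← Ideal.iInf_pow_smul_eq_bot_of_isLocalRing 𝔮 h𝔮_ne_top]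
    refine le_iInf fun n => ?_
    calc LinearMap.ker (a • LinearMap.id)
        ≤ (𝔮 ^ (N + n + c) • ⊤ : Submodule A M).comap (a • LinearMap.id) :=
          LinearMap.ker_le_comap _
      _ ≤ 𝔮 ^ (N + n) • ⊤ := colon_le _ (Nat.le_add_right N n)
      _ ≤ 𝔮 ^ n • ⊤ := smul_mono_left (Ideal.pow_le_pow_right (Nat.le_add_left n N))
  · rw [pow_add, mul_comm, mul_smul]
    exact le_comap_smul_id_smul_of_mem ha _

/-- Over a Noetherian local ring with `𝔮 ⊆ 𝔪`: if `(𝔮^nM)^{aA} = 𝔮^nM` for all `n ≥ N`,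
then `(0 :_M a) = 0` and `(𝔮^{n+c}M :_M a) = 𝔮^nM` for all `n ≥ N`. -/
theorem regular_and_colon_stable_of_saturation_eq
    {A M : Type} [CommRing A] [IsNoetherianRing A] [IsLocalRing A]
    [AddCommGroup M] [Module A M] [Module.Finite A M]
    (𝔮 : Ideal A) (h𝔮 : 𝔮 ≤ IsLocalRing.maximalIdeal A)
    (c : ℕ) (hc : 1 ≤ c) (a : A) (ha : a ∈ 𝔮 ^ c) (N : ℕ)
    (h : ∀ n ≥ N,
      (⨆ l : ℕ, Submodule.comap ((a ^ l) • (LinearMap.id : M →ₗ[A] M))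
        ((𝔮 ^ n * (𝔮 ^ c) ^ l) • ⊤)) = 𝔮 ^ n • ⊤) :
    LinearMap.ker (a • (LinearMap.id : M →ₗ[A] M)) = ⊥ ∧
    ∀ n ≥ N,
      Submodule.comap (a • (LinearMap.id : M →ₗ[A] M)) (𝔮 ^ (n + c) • ⊤) = 𝔮 ^ n • ⊤ :=
  regular_and_colon_stable_of_saturation_eq_general 𝔮 h𝔮 c a ha N h
end

section
/- Let (A, 𝔪) be a commutative Noetherian local ring, 𝔮 ⊆ 𝔪 an ideal, M a finitely generated A-module, c ≥ 1 an integer, and a ∈ 𝔮^c a nonzerodivisor on M such that the quotient module M/aM has finite length. Suppose there exist integers l, k such that (𝔮^{n+c}M :_M a) ∩ 𝔮^lM = 𝔮^nM for all n ≥ k. Then there exists an integer N such that 𝔮^{n+c}M = a·(𝔮^nM) for all n ≥ N. -/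
/-! Since `M/aM` has finite length, a power of `𝔮` maps `M` into `aM`, and Artin–Rees then gives
`𝔮^{n+c}M ⊆ 𝔮^l(aM)` for large `n`. So every `x ∈ 𝔮^{n+c}M` is `a·m` with `m ∈ 𝔮^lM`, and such
an `m` lies in `(𝔮^{n+c}M :_M a) ∩ 𝔮^lM = 𝔮^nM`. -/

open Filter IsLocalRing

namespace Submodule

variable {R M : Type*} [CommRing R] [AddCommGroup M] [Module R M]

theorem exists_pow_smul_top_eq_bot_of_le_jacobson [IsNoetherian R M] [IsArtinian R M]
    {I : Ideal R} (hI : I ≤ (⊥ : Ideal R).jacobson) : ∃ s, I ^ s • (⊤ : Submodule R M) = ⊥ := by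
  obtain ⟨s, hs⟩ := IsArtinian.monotone_stabilizes (R := R) (M := M)
    ⟨fun n ↦ OrderDual.toDual (I ^ n • ⊤), fun _ _ h ↦ pow_smul_top_le I M h⟩
  refine ⟨s, eq_bot_of_le_smul_of_le_jacobson_bot I _ (IsNoetherian.noetherian _) (le_of_eq ?_) hI⟩
  calc I ^ s • ⊤ = I ^ (s + 1) • ⊤ := hs (s + 1) s.le_succ
    _ = I • I ^ s • ⊤ := by rw [pow_succ', mul_smul]

theorem exists_pow_smul_top_le_of_le_jacobson {I : Ideal R} (hI : I ≤ (⊥ : Ideal R).jacobson)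
    {N : Submodule R M} (hN : IsFiniteLength R (M ⧸ N)) : ∃ s, I ^ s • ⊤ ≤ N := by
  obtain ⟨_, _⟩ := isFiniteLength_iff_isNoetherian_isArtinian.mp hN
  obtain ⟨s, hs⟩ := exists_pow_smul_top_eq_bot_of_le_jacobson (M := M ⧸ N) hI
  refine ⟨s, fun x hx ↦ ?_⟩
  have hx' : N.mkQ x ∈ (I ^ s • ⊤ : Submodule R M).map N.mkQ := mem_map_of_mem hx
  rwa [map_smul'', map_top, range_mkQ, hs, mem_bot, mkQ_apply, Quotient.mk_eq_zero] at hx'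

theorem map_smul_id_le_smul {a : R} {J : Ideal R} (ha : a ∈ J) (P : Submodule R M) :
    P.map (a • LinearMap.id) ≤ J • P := by
  rintro _ ⟨m, hm, rfl⟩
  exact smul_mem_smul ha hm

end Submodule

theorem Ideal.eventually_pow_smul_top_le_pow_smul {R M : Type*} [CommRing R] [IsNoetherianRing R]
    [AddCommGroup M] [Module R M] [Module.Finite R M] {I : Ideal R} {N : Submodule R M} {s : ℕ}
    (hN : I ^ s • ⊤ ≤ N) (l : ℕ) : ∀ᶠ n in atTop, I ^ n • ⊤ ≤ I ^ l • N := by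
  obtain ⟨r, hr⟩ := I.exists_pow_inf_eq_pow_smul N
  filter_upwards [eventually_ge_atTop (max s (r + l))] with n hn
  calc I ^ n • ⊤ = I ^ n • ⊤ ⊓ N :=
        (inf_eq_left.mpr ((Submodule.pow_smul_top_le I M (by omega)).trans hN)).symm
    _ = I ^ (n - r) • (I ^ r • ⊤ ⊓ N) := hr n (by omega)
    _ ≤ I ^ (n - r) • N := Submodule.smul_mono le_rfl inf_le_right
    _ ≤ I ^ l • N := Submodule.smul_mono_left (Ideal.pow_le_pow_right (by omega))

theorem pow_smul_eq_smul_pow_smul_of_superficial_general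
    {A M : Type} [CommRing A] [IsNoetherianRing A] [IsLocalRing A]
    [AddCommGroup M] [Module A M] [Module.Finite A M]
    (𝔮 : Ideal A) (h𝔮 : 𝔮 ≤ IsLocalRing.maximalIdeal A)
    (c : ℕ) (a : A) (ha : a ∈ 𝔮 ^ c)
    (hfl : IsFiniteLength A
      (M ⧸ Submodule.map (a • (LinearMap.id : M →ₗ[A] M)) (⊤ : Submodule A M)))
    (l k : ℕ)
    (h : ∀ n ≥ k,
      Submodule.comap (a • (LinearMap.id : M →ₗ[A] M)) (𝔮 ^ (n + c) • ⊤) ⊓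
        (𝔮 ^ l • ⊤) = 𝔮 ^ n • ⊤) :
    ∃ N : ℕ, ∀ n ≥ N,
      𝔮 ^ (n + c) • (⊤ : Submodule A M) =
        Submodule.map (a • (LinearMap.id : M →ₗ[A] M)) (𝔮 ^ n • ⊤) := by
  obtain ⟨s, hs⟩ := Submodule.exists_pow_smul_top_le_of_le_jacobson
    (h𝔮.trans_eq (jacobson_eq_maximalIdeal ⊥ bot_ne_top).symm) hfl
  have hlarge : ∀ᶠ n in atTop, 𝔮 ^ (n + c) • ⊤ ≤ 𝔮 ^ l • Submodule.map (a • LinearMap.id) ⊤ :=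
    (tendsto_add_atTop_nat c).eventually (Ideal.eventually_pow_smul_top_le_pow_smul hs l)
  refine eventually_atTop.mp ?_
  filter_upwards [eventually_ge_atTop k, hlarge] with n hk hn
  refine le_antisymm ?_ ((Submodule.map_smul_id_le_smul ha _).trans_eq ?_)
  · rw [← h n hk, inf_comm, ← Submodule.map_inf_eq_map_inf_comap, Submodule.map_smul'']
    exact le_inf hn le_rfl
  · rw [← Submodule.mul_smul, ← pow_add, add_comm]

/-- Over a Noetherian local ring, if `a ∈ 𝔮^c` is a nonzerodivisor on `M` with `M/aM` of
finite length, and `(𝔮^{n+c}M :_M a) ∩ 𝔮^lM = 𝔮^nM` for all `n ≥ k`, then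
`𝔮^{n+c}M = a·(𝔮^nM)` for all large `n`. -/
theorem pow_smul_eq_smul_pow_smul_of_superficial
    {A M : Type} [CommRing A] [IsNoetherianRing A] [IsLocalRing A]
    [AddCommGroup M] [Module A M] [Module.Finite A M]
    (𝔮 : Ideal A) (h𝔮 : 𝔮 ≤ IsLocalRing.maximalIdeal A)
    (c : ℕ) (hc : 1 ≤ c) (a : A) (ha : a ∈ 𝔮 ^ c)
    (hreg : ∀ m : M, a • m = 0 → m = 0)
    (hfl : IsFiniteLength A
      (M ⧸ Submodule.map (a • (LinearMap.id : M →ₗ[A] M)) (⊤ : Submodule A M)))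
    (l k : ℕ)
    (h : ∀ n ≥ k,
      Submodule.comap (a • (LinearMap.id : M →ₗ[A] M)) (𝔮 ^ (n + c) • ⊤) ⊓
        (𝔮 ^ l • ⊤) = 𝔮 ^ n • ⊤) :
    ∃ N : ℕ, ∀ n ≥ N,
      𝔮 ^ (n + c) • (⊤ : Submodule A M) =
        Submodule.map (a • (LinearMap.id : M →ₗ[A] M)) (𝔮 ^ n • ⊤) :=
  pow_smul_eq_smul_pow_smul_of_superficial_general 𝔮 h𝔮 c a ha hfl l k h
end
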